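/- With notation as in the structure theory of an indecomposable non-simple quadratic Lie super algebra g = a ⊕ h ⊕ I of degree δ, the map σ : a → gl(I) (defined by σ(x)(α) = [x,α]) is a representation of (a, [·,·]_a) on I, isomorphic to the δ-coadjoint representation ad*_δ : a → gl(P_δ(a)*) via ξ_δ: that is, ξ_δ ∘ σ(x) = ad*_δ(x) ∘ ξ_δ for all x ∈ a. -/

import Mathlib

/-! Since `I` commutes with `hh ⊕ I`, and all these subspaces are graded, super skew-symmetry
gives `[w, α] = 0` for `w ∈ hh ⊕ I` and `α ∈ I` as well. Hence `[x, y]` and its component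
`[x, y]_a` act identically on `I`, and, as `hh ⊕ I = I^⊥`, pair identically with `I` under `B`.
The representation property is then the super Jacobi identity in Leibniz form, and the coadjoint
identity is the invariance of `B` after moving `x` past `α` by skew-symmetry. -/

/-- The sign `(-1)^{ij}` for `i j : ZMod 2`. -/
def sgn (F : Type*) [Field F] (i j : ZMod 2) : F := (-1) ^ (i * j).val

/-- The orthogonal `J^⊥ = {w : B(j, w) = 0 for all j ∈ J}` of a subspace with
respect to a bilinear form `B`. -/
def orth {F V : Type*} [Field F] [AddCommGroup V] [Module F V]
    (B : V →ₗ[F] V →ₗ[F] F) (J : Submodule F V) : Submodule F V where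
  carrier := {w | ∀ j ∈ J, B j w = 0}
  add_mem' := by
    intro w w' hw hw' j hj
    simp [hw j hj, hw' j hj]
  zero_mem' := by
    intro j hj
    simp
  smul_mem' := by
    intro c w hw j hj
    simp [hw j hj]

theorem sgn_comm (F : Type*) [Field F] (i j : ZMod 2) : sgn F i j = sgn F j i := by
  rw [sgn, sgn, mul_comm]

theorem sgn_mul_self (F : Type*) [Field F] (i j : ZMod 2) : sgn F i j * sgn F i j = 1 := by
  rw [sgn, ← pow_add, ← two_mul, pow_mul, neg_one_sq, one_pow]

theorem sgn_add_right (F : Type*) [Field F] (i j k : ZMod 2) :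
    sgn F i (j + k) = sgn F i j * sgn F i k := by
  rw [sgn, sgn, sgn, mul_add, ZMod.val_add, ← neg_one_pow_eq_pow_mod_two, pow_add]

section Graded

variable {F V : Type*} [Field F] [AddCommGroup V] [Module F V]

def IsGraded (g : ZMod 2 → Submodule F V) (W : Submodule F V) : Prop :=
  W = (W ⊓ g 0) ⊔ (W ⊓ g 1)

theorem IsGraded.induction {g : ZMod 2 → Submodule F V} {W : Submodule F V}
    (hW : IsGraded g W) {p : V → Prop} (hadd : ∀ v w, p v → p w → p (v + w))
    (hhom : ∀ k, ∀ v ∈ W, v ∈ g k → p v) : ∀ v ∈ W, p v := by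
  intro v hv
  rw [hW] at hv
  obtain ⟨v₀, hv₀, v₁, hv₁, rfl⟩ := Submodule.mem_sup.mp hv
  exact hadd _ _ (hhom 0 v₀ hv₀.1 hv₀.2) (hhom 1 v₁ hv₁.1 hv₁.2)

theorem IsGraded.sup {g : ZMod 2 → Submodule F V} {W W' : Submodule F V}
    (hW : IsGraded g W) (hW' : IsGraded g W') : IsGraded g (W ⊔ W') :=
  le_antisymm
    (sup_le
      (hW.le.trans (sup_le_sup (inf_le_inf_right _ le_sup_left) (inf_le_inf_right _ le_sup_left)))
      (hW'.le.trans
        (sup_le_sup (inf_le_inf_right _ le_sup_right) (inf_le_inf_right _ le_sup_right))))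
    (sup_le inf_le_left inf_le_left)

end Graded

section SuperBracket

variable {F V : Type*} [Field F] [AddCommGroup V] [Module F V]
  {g : ZMod 2 → Submodule F V} {br : V →ₗ[F] V →ₗ[F] V}

theorem flip_eq_zero_of_isGraded
    (hbr_skew : ∀ i j : ZMod 2, ∀ x y : V, x ∈ g i → y ∈ g j →
      br x y = -(sgn F i j) • br y x)
    {W : Submodule F V} (hW : IsGraded g W) {k : ZMod 2} {α : V} (hα : α ∈ g k)
    (h : ∀ w ∈ W, br α w = 0) : ∀ w ∈ W, br w α = 0 :=
  hW.induction (fun v w hv hw => by simp [hv, hw])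
    (fun i w hw hwi => by simp [hbr_skew i k w α hwi hα, h w hw])

theorem br_br_eq_of_jacobi
    (hbr_even : ∀ i j : ZMod 2, ∀ x y : V, x ∈ g i → y ∈ g j → br x y ∈ g (i + j))
    (hbr_skew : ∀ i j : ZMod 2, ∀ x y : V, x ∈ g i → y ∈ g j →
      br x y = -(sgn F i j) • br y x)
    (hbr_jac : ∀ i j k : ZMod 2, ∀ x y z : V, x ∈ g i → y ∈ g j → z ∈ g k →
      sgn F i k • br x (br y z) + sgn F j i • br y (br z x)
        + sgn F k j • br z (br x y) = 0)
    {i j k : ZMod 2} {x y z : V} (hx : x ∈ g i) (hy : y ∈ g j) (hz : z ∈ g k) :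
    br (br x y) z = br x (br y z) - sgn F i j • br y (br x z) := by
  have hjac := hbr_jac i j k x y z hx hy hz
  rw [hbr_skew k i z x hz hx, hbr_skew k (i + j) z (br x y) hz (hbr_even i j x y hx hy),
    sgn_add_right, sgn_comm F i k] at hjac
  simp only [map_smul, smul_smul] at hjac
  have hki := sgn_mul_self F k i
  have hkj := sgn_mul_self F k j
  rw [sgn_comm F i j]
  linear_combination (norm := match_scalars) (-sgn F k i) • hjac <;> grind

end SuperBracket

theorem sigma_is_coadjoint_general
    (F V : Type*) [Field F]
    [AddCommGroup V] [Module F V]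
    (g : ZMod 2 → Submodule F V)
    (br : V →ₗ[F] V →ₗ[F] V)
    -- `(g, [·,·])` is a Lie super algebra
    (hbr_even : ∀ i j : ZMod 2, ∀ x y : V, x ∈ g i → y ∈ g j → br x y ∈ g (i + j))
    (hbr_skew : ∀ i j : ZMod 2, ∀ x y : V, x ∈ g i → y ∈ g j →
      br x y = -(sgn F i j) • br y x)
    (hbr_jac : ∀ i j k : ZMod 2, ∀ x y z : V, x ∈ g i → y ∈ g j → z ∈ g k →
      sgn F i k • br x (br y z) + sgn F j i • br y (br z x)
        + sgn F k j • br z (br x y) = 0)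
    -- `B` is an invariant metric of degree `δ`
    (B : V →ₗ[F] V →ₗ[F] F)
    (hB_inv : ∀ x y z : V, B (br x y) z = B x (br y z))
    -- `I` is a minimal graded ideal, contained in `I^⊥` and abelian
    (I : Submodule F V)
    (hI_graded : I = (I ⊓ g 0) ⊔ (I ⊓ g 1))
    -- graded complements: `I^⊥ = hh ⊕ I`, `hh^⊥ = aa ⊕ I`, `aa` isotropic,
    -- `g = aa ⊕ hh ⊕ I`, and `[I, I^⊥] = 0`
    (hh aa : Submodule F V)
    (hhh_graded : hh = (hh ⊓ g 0) ⊔ (hh ⊓ g 1))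
    (hIperp : hh ⊔ I = orth B I)
    (hcentral : ∀ α ∈ I, ∀ w ∈ hh ⊔ I, br α w = 0)
    -- components of the bracket with respect to `g = aa ⊕ hh ⊕ I`
    (bra lam mu : V →ₗ[F] V →ₗ[F] V)
    (hcomp_a : ∀ x ∈ aa, ∀ y ∈ aa, br x y = bra x y + lam x y + mu x y ∧
      bra x y ∈ aa ∧ lam x y ∈ hh ∧ mu x y ∈ I)
    :
    -- `σ` is a representation of `(aa, [·,·]_a)` on `I`
    (∀ i j : ZMod 2, ∀ x y : V, x ∈ aa → x ∈ g i → y ∈ aa → y ∈ g j →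
      ∀ α ∈ I, br (bra x y) α = br x (br y α) - sgn F i j • br y (br x α)) ∧
    -- `ξ_δ ∘ σ(x) = ad*_δ(x) ∘ ξ_δ`
    (∀ i d : ZMod 2, ∀ x α : V, x ∈ aa → x ∈ g i → α ∈ I → α ∈ g d →
      ∀ y ∈ aa, B (br x α) y = -(sgn F d i) * B α (bra x y)) := by
  have hbr_sub_bra : ∀ x ∈ aa, ∀ y ∈ aa, br x y - bra x y ∈ hh ⊔ I := fun x hx y hy => by
    obtain ⟨hsplit, -, hlam, hmu⟩ := hcomp_a x hx y hy
    rw [hsplit, add_assoc, add_sub_cancel_left]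
    exact add_mem (Submodule.mem_sup_left hlam) (Submodule.mem_sup_right hmu)
  have hI_central : ∀ k, ∀ α ∈ I, α ∈ g k → ∀ w ∈ hh ⊔ I, br w α = 0 := fun k α hα hαk =>
    flip_eq_zero_of_isGraded hbr_skew (IsGraded.sup hhh_graded hI_graded) hαk (hcentral α hα)
  refine ⟨fun i j x y hx hxi hy hyj => IsGraded.induction hI_graded ?_ ?_, ?_⟩
  · intro α β hα hβ
    simp only [map_add, hα, hβ, smul_add]
    abel
  · intro k α hα hαk
    rw [← br_br_eq_of_jacobi hbr_even hbr_skew hbr_jac hxi hyj hαk, eq_comm, ← sub_eq_zero,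
      ← LinearMap.sub_apply, ← map_sub]
    exact hI_central k α hα hαk _ (hbr_sub_bra x hx y hy)
  · intro i d x α hx hxi hα hαd y hy
    have hα_bra : B α (br x y) = B α (bra x y) := by
      rw [← sub_eq_zero, ← map_sub]
      exact (hIperp ▸ hbr_sub_bra x hx y hy) α hα
    rw [hbr_skew i d x α hxi hαd, map_smul, LinearMap.smul_apply, hB_inv, hα_bra, sgn_comm,
      smul_eq_mul, neg_mul]

/-- in the decomposition `g = aa ⊕ hh ⊕ I`, the map
`σ : aa → gl(I)`, `σ(x)(α) = [x, α]`, is a representation of `(aa, [·,·]_a)` on `I`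
isomorphic to the δ-coadjoint representation via `ξ_δ` (where
`ξ_δ(α)(P_δ y) = B(α, y)`): concretely `ξ_δ ∘ σ(x) = ad*_δ(x) ∘ ξ_δ`, i.e.
`B([x,α], y) = -(-1)^{|α||x|} B(α, [x,y]_a)` for homogeneous `x ∈ aa`, `α ∈ I`
and all `y ∈ aa`. -/
theorem sigma_is_coadjoint
    (F V : Type*) [Field F] [IsAlgClosed F] [CharZero F]
    [AddCommGroup V] [Module F V] [FiniteDimensional F V]
    (g : ZMod 2 → Submodule F V) (hg : DirectSum.IsInternal g)
    (br : V →ₗ[F] V →ₗ[F] V)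
    -- `(g, [·,·])` is a Lie super algebra
    (hbr_even : ∀ i j : ZMod 2, ∀ x y : V, x ∈ g i → y ∈ g j → br x y ∈ g (i + j))
    (hbr_skew : ∀ i j : ZMod 2, ∀ x y : V, x ∈ g i → y ∈ g j →
      br x y = -(sgn F i j) • br y x)
    (hbr_jac : ∀ i j k : ZMod 2, ∀ x y z : V, x ∈ g i → y ∈ g j → z ∈ g k →
      sgn F i k • br x (br y z) + sgn F j i • br y (br z x)
        + sgn F k j • br z (br x y) = 0)
    -- `B` is an invariant metric of degree `δ`
    (δ : ZMod 2) (B : V →ₗ[F] V →ₗ[F] F)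
    (hB_symm : ∀ i j : ZMod 2, ∀ x y : V, x ∈ g i → y ∈ g j →
      B x y = sgn F i j * B y x)
    (hB_inv : ∀ x y z : V, B (br x y) z = B x (br y z))
    (hB_nd : ∀ x : V, (∀ y : V, B x y = 0) → x = 0)
    (hB_deg : ∀ i j : ZMod 2, ∀ x y : V, x ∈ g i → y ∈ g j → i + j ≠ δ → B x y = 0)
    -- `g` is non-simple of dimension `> 1`
    (hdim : 1 < Module.finrank F V)
    (hns : ∃ J : Submodule F V, (∀ x : V, ∀ v ∈ J, br x v ∈ J) ∧
      J = (J ⊓ g 0) ⊔ (J ⊓ g 1) ∧ J ≠ ⊥ ∧ J ≠ ⊤)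
    -- `g` is indecomposable
    (hind : ¬ ∃ J : Submodule F V, (∀ x : V, ∀ v ∈ J, br x v ∈ J) ∧
      J = (J ⊓ g 0) ⊔ (J ⊓ g 1) ∧ J ≠ ⊥ ∧ J ≠ ⊤ ∧ IsCompl J (orth B J))
    -- `I` is a minimal graded ideal, contained in `I^⊥` and abelian
    (I : Submodule F V)
    (hI_ideal : ∀ x : V, ∀ v ∈ I, br x v ∈ I)
    (hI_graded : I = (I ⊓ g 0) ⊔ (I ⊓ g 1))
    (hI_ne : I ≠ ⊥)
    (hI_min : ∀ J : Submodule F V, (∀ x : V, ∀ v ∈ J, br x v ∈ J) →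
      J = (J ⊓ g 0) ⊔ (J ⊓ g 1) → J ≤ I → J = ⊥ ∨ J = I)
    (hI_deg : I ≤ orth B I)
    -- graded complements: `I^⊥ = hh ⊕ I`, `hh^⊥ = aa ⊕ I`, `aa` isotropic,
    -- `g = aa ⊕ hh ⊕ I`, and `[I, I^⊥] = 0`
    (hh aa : Submodule F V)
    (hhh_graded : hh = (hh ⊓ g 0) ⊔ (hh ⊓ g 1))
    (haa_graded : aa = (aa ⊓ g 0) ⊔ (aa ⊓ g 1))
    (hIperp : hh ⊔ I = orth B I)
    (hhhperp : aa ⊔ I = orth B hh)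
    (haa_iso : ∀ x ∈ aa, ∀ y ∈ aa, B x y = 0)
    (hdisj1 : Disjoint hh I)
    (hdisj2 : Disjoint aa (hh ⊔ I))
    (hsum : aa ⊔ (hh ⊔ I) = ⊤)
    (hcentral : ∀ α ∈ I, ∀ w ∈ hh ⊔ I, br α w = 0)
    -- components of the bracket with respect to `g = aa ⊕ hh ⊕ I`
    (bra lam mu rho tau brh gam : V →ₗ[F] V →ₗ[F] V)
    (hcomp_a : ∀ x ∈ aa, ∀ y ∈ aa, br x y = bra x y + lam x y + mu x y ∧
      bra x y ∈ aa ∧ lam x y ∈ hh ∧ mu x y ∈ I)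
    (hcomp_ah : ∀ x ∈ aa, ∀ u ∈ hh, br x u = rho x u + tau x u ∧
      rho x u ∈ hh ∧ tau x u ∈ I)
    (hcomp_h : ∀ u ∈ hh, ∀ v ∈ hh, br u v = brh u v + gam u v ∧
      brh u v ∈ hh ∧ gam u v ∈ I)
    (hcomp_aI : ∀ x ∈ aa, ∀ α ∈ I, br x α ∈ I)
    :
    -- `σ` is a representation of `(aa, [·,·]_a)` on `I`
    (∀ i j : ZMod 2, ∀ x y : V, x ∈ aa → x ∈ g i → y ∈ aa → y ∈ g j →
      ∀ α ∈ I, br (bra x y) α = br x (br y α) - sgn F i j • br y (br x α)) ∧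
    -- `ξ_δ ∘ σ(x) = ad*_δ(x) ∘ ξ_δ`
    (∀ i d : ZMod 2, ∀ x α : V, x ∈ aa → x ∈ g i → α ∈ I → α ∈ g d →
      ∀ y ∈ aa, B (br x α) y = -(sgn F d i) * B α (bra x y)) :=
  sigma_is_coadjoint_general F V g br hbr_even hbr_skew hbr_jac B hB_inv I hI_graded hh aa
    hhh_graded hIperp hcentral bra lam mu hcomp_a
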